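/- arXiv:2304.01845 — 2 statements merged into one kernel-verified Lean document; each statement's English description precedes it below -/
import Mathlib

section
/- Let X be a quantum-Wajsberg algebra and F ⊆ X. The following are equivalent: (a) F is a deductive system of X; (b) F is nonempty, satisfies (F₁) (x, y ∈ F implies x⊙y ∈ F) and (F₄): x ∈ F, y ∈ X and x ≤ y imply y ∈ F; (c) F is nonempty, satisfies (F₁) and (F₅): x ∈ F and y ∈ X imply x⊔y ∈ F; (d) F is a filter of X satisfying (F₆): x ∈ F, y ∈ X and x ∼ y imply y ∈ F. -/
/-- The underlying involutive bounded BE algebra of a quantum-Wajsberg algebra. -/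
class PreQW (X : Type*) where
  imp : X → X → X
  zero : X
  one : X
  imp_self : ∀ x : X, imp x x = one
  imp_one : ∀ x : X, imp x one = one
  one_imp : ∀ x : X, imp one x = x
  exchange : ∀ x y z : X, imp x (imp y z) = imp y (imp x z)
  zero_imp : ∀ x : X, imp zero x = one
  involutive : ∀ x : X, imp (imp x zero) zero = x

namespace PreQW

variable {X : Type*} [PreQW X]

/-- `x* = x → 0`. -/
def qstar (x : X) : X := imp x zero

/-- `x ⊔ y = (x → y) → y`. -/
def qsup (x y : X) : X := imp (imp x y) y

/-- `x ⊓ y = ((x* → y*) → y*)*`. -/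
def qinf (x y : X) : X := qstar (imp (imp (qstar x) (qstar y)) (qstar y))

/-- `x ⊙ y = (x → y*)*`. -/
def qprod (x y : X) : X := qstar (imp x (qstar y))

/-- `x ≤ y` iff `x → y = 1`. -/
def qle (x y : X) : Prop := imp x y = one

/-- `x ≤_Q y` iff `x = x ⊓ y`. -/
def qleQ (x y : X) : Prop := x = qinf x y

/-- `xⁿ = x ⊙ ⋯ ⊙ x` (`n` factors), with `x⁰ = 1`. -/
def qpow (x : X) : ℕ → X
  | 0 => one
  | n + 1 => qprod x (qpow x n)

/-- A filter: nonempty, closed under `⊙`, and `x ∈ F` implies `y → x ∈ F`. -/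
def IsFilter (F : Set X) : Prop :=
  F.Nonempty ∧ (∀ x ∈ F, ∀ y ∈ F, qprod x y ∈ F) ∧ (∀ x ∈ F, ∀ y : X, imp y x ∈ F)

/-- A deductive system: contains `1` and is closed under modus ponens. -/
def IsDS (F : Set X) : Prop :=
  (one : X) ∈ F ∧ ∀ x ∈ F, ∀ y : X, imp x y ∈ F → y ∈ F

/-- A maximal filter: proper and not strictly contained in any proper filter. -/
def IsMaximal (F : Set X) : Prop :=
  IsFilter F ∧ F ≠ Set.univ ∧
    ∀ G : Set X, IsFilter G → F ⊆ G → G ≠ Set.univ → G = F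

/-- The strong maximality condition: for every `x ∉ F`, `(xⁿ)* ∈ F` for some `n ≥ 1`. -/
def StrongMaxCond (F : Set X) : Prop :=
  ∀ x : X, x ∉ F → ∃ n : ℕ, 1 ≤ n ∧ qstar (qpow x n) ∈ F

/-- A strongly maximal filter. -/
def IsStronglyMaximal (F : Set X) : Prop :=
  IsFilter F ∧ StrongMaxCond F

/-- `x ∼ y`: there is `α` with `x ≤ α ≤ x` and `y ≤ α ≤ y`. -/
def Persp (x y : X) : Prop :=
  ∃ α : X, imp x α = one ∧ imp α x = one ∧ imp y α = one ∧ imp α y = one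

/-- `x ≡_F y` iff there is `λ` with `x, y ≤_Q λ` and `λ → x, λ → y ∈ F`. -/
def equivF (F : Set X) (x y : X) : Prop :=
  ∃ l : X, qleQ x l ∧ qleQ y l ∧ imp l x ∈ F ∧ imp l y ∈ F

end PreQW

/-- A quantum-Wajsberg algebra: an involutive BE algebra satisfying axiom (QW). -/
class QW (X : Type*) extends PreQW X where
  qw : ∀ x y z : X,
    imp x (PreQW.qinf (PreQW.qinf x y) (PreQW.qinf z x)) =
      PreQW.qinf (imp x y) (imp x z)

open PreQW

section Lemmas

variable {X : Type*} [PreQW X]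

private lemma sstar_sstar (x : X) : qstar (qstar x) = x := PreQW.involutive x

private lemma contrap (x y : X) : imp x y = imp (qstar y) (qstar x) := by
  have h : imp x (imp (imp y zero) zero) = imp (imp y zero) (imp x zero) :=
    PreQW.exchange x (imp y zero) zero
  rw [PreQW.involutive] at h
  exact h

private lemma self_le_sup (x y : X) : imp x (qsup x y) = one := by
  show imp x (imp (imp x y) y) = one
  rw [PreQW.exchange, PreQW.imp_self]

private lemma le_imp_self (x y : X) : imp x (imp y x) = one := by
  rw [PreQW.exchange, PreQW.imp_self, PreQW.imp_one]

private lemma sup_absorb (x y : X) : qsup x (qsup x y) = qsup x y := by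
  show imp (imp x (qsup x y)) (qsup x y) = qsup x y
  rw [self_le_sup, PreQW.one_imp]

private lemma star_inf (x y : X) : qstar (qinf x y) = qsup (qstar x) (qstar y) :=
  sstar_sstar (qsup (qstar x) (qstar y))

private lemma inf_absorb (x y : X) : qinf x (qinf x y) = qinf x y := by
  show qstar (qsup (qstar x) (qstar (qinf x y))) = qinf x y
  rw [star_inf, sup_absorb]
  rfl

private lemma one_inf (x : X) : qinf one x = x := by
  show qstar (imp (imp (qstar one) (qstar x)) (qstar x)) = x
  have h1 : qstar (one : X) = zero := PreQW.one_imp zero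
  rw [h1, PreQW.zero_imp, PreQW.one_imp]
  exact sstar_sstar x

private lemma inf_one (x : X) : qinf x one = x := by
  show qstar (imp (imp (qstar x) (qstar one)) (qstar one)) = x
  have h1 : qstar (one : X) = zero := PreQW.one_imp zero
  rw [h1, PreQW.involutive]
  exact sstar_sstar x

private lemma lemL7 (x y : X) : imp y (imp x (qprod x y)) = one := by
  show imp y (imp x (imp (imp x (imp y zero)) zero)) = one
  rw [show imp x (imp (imp x (imp y zero)) zero)
        = imp (imp x (imp y zero)) (imp x zero) from PreQW.exchange x (imp x (imp y zero)) zero]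
  rw [show imp y (imp (imp x (imp y zero)) (imp x zero))
        = imp (imp x (imp y zero)) (imp y (imp x zero)) from PreQW.exchange y (imp x (imp y zero)) (imp x zero)]
  rw [show imp y (imp x zero) = imp x (imp y zero) from PreQW.exchange y x zero]
  rw [PreQW.imp_self]

private lemma lemL8 (x y : X) : imp (qprod x (imp x y)) y = one := by
  rw [contrap]
  rw [show qstar (qprod x (imp x y)) = imp x (qstar (imp x y)) from
    sstar_sstar (imp x (qstar (imp x y)))]
  rw [show imp (qstar y) (imp x (qstar (imp x y)))
        = imp x (imp (qstar y) (qstar (imp x y))) from PreQW.exchange (qstar y) x (qstar (imp x y))]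
  rw [← contrap]
  exact self_le_sup x y

end Lemmas

section QWLemmas

variable {X : Type*} [QW X]

private lemma lemA (x y : X) : imp x (qinf (qinf x y) x) = imp x y := by
  have h := QW.qw x y one
  rw [one_inf, PreQW.imp_one, inf_one] at h
  exact h

private lemma imp_inf (x y : X) : imp x (qinf x y) = imp x y := by
  have h1 := lemA x y
  have h2 := lemA x (qinf x y)
  rw [inf_absorb, h1] at h2
  exact h2.symm

private lemma lemG (y z : X) (h : imp z y = one) : imp (qsup y z) y = one := by
  rw [contrap (qsup y z) y]
  have hs : qstar (qsup y z) = qinf (qstar y) (qstar z) := by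
    show qstar (qsup y z) = qstar (qsup (qstar (qstar y)) (qstar (qstar z)))
    rw [sstar_sstar, sstar_sstar]
  rw [hs, imp_inf, ← contrap]
  exact h

end QWLemmas

/-- Proposition 3.8: characterizations of deductive systems. -/
theorem qw_prop_3_8 {X : Type*} [QW X] (F : Set X) :
    (IsDS F ↔
      (F.Nonempty ∧ (∀ x ∈ F, ∀ y ∈ F, qprod x y ∈ F) ∧
        ∀ x ∈ F, ∀ y : X, qle x y → y ∈ F)) ∧
    (IsDS F ↔
      (F.Nonempty ∧ (∀ x ∈ F, ∀ y ∈ F, qprod x y ∈ F) ∧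
        ∀ x ∈ F, ∀ y : X, qsup x y ∈ F)) ∧
    (IsDS F ↔
      (IsFilter F ∧ ∀ x ∈ F, ∀ y : X, Persp x y → y ∈ F)) := by
  have hF1 : IsDS F → ∀ x ∈ F, ∀ y ∈ F, qprod x y ∈ F := by
    rintro ⟨h1, hMP⟩ x hx y hy
    have h7 : imp y (imp x (qprod x y)) ∈ F := by rw [lemL7]; exact h1
    exact hMP x hx _ (hMP y hy _ h7)
  have hF4 : IsDS F → ∀ x ∈ F, ∀ y : X, qle x y → y ∈ F := by
    rintro ⟨h1, hMP⟩ x hx y hxy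
    refine hMP x hx y ?_
    rw [show imp x y = one from hxy]
    exact h1
  have hab : IsDS F → (F.Nonempty ∧ (∀ x ∈ F, ∀ y ∈ F, qprod x y ∈ F) ∧
      ∀ x ∈ F, ∀ y : X, qle x y → y ∈ F) :=
    fun h => ⟨⟨one, h.1⟩, hF1 h, hF4 h⟩
  have hba : (F.Nonempty ∧ (∀ x ∈ F, ∀ y ∈ F, qprod x y ∈ F) ∧
      ∀ x ∈ F, ∀ y : X, qle x y → y ∈ F) → IsDS F := by
    rintro ⟨⟨w, hw⟩, h1, h4⟩
    have hone : (one : X) ∈ F := h4 w hw one (PreQW.imp_one w)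
    refine ⟨hone, fun x hx y hxy => ?_⟩
    exact h4 _ (h1 x hx _ hxy) y (lemL8 x y)
  refine ⟨⟨hab, hba⟩, ⟨?_, ?_⟩, ?_, ?_⟩
  · intro h
    exact ⟨⟨one, h.1⟩, hF1 h, fun x hx y => hF4 h x hx _ (self_le_sup x y)⟩
  · rintro ⟨hne, h1, h5⟩
    apply hba
    refine ⟨hne, h1, fun x hx y hxy => ?_⟩
    have hsy := h5 x hx y
    have e : qsup x y = y := by
      show imp (imp x y) y = y
      rw [show imp x y = one from hxy, PreQW.one_imp]
    rwa [e] at hsy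
  · intro h
    refine ⟨⟨⟨one, h.1⟩, hF1 h, fun x hx y => hF4 h x hx _ (le_imp_self x y)⟩, ?_⟩
    rintro x hx y ⟨α, hxa, hax, hya, hay⟩
    have hα : α ∈ F := h.2 x hx α (by rw [hxa]; exact h.1)
    exact h.2 α hα y (by rw [hay]; exact h.1)
  · rintro ⟨⟨⟨w, hw⟩, h1, h2⟩, h6⟩
    have hone : (one : X) ∈ F := by
      have := h2 w hw w
      rwa [PreQW.imp_self] at this
    refine ⟨hone, fun x hx y hxy => ?_⟩
    have hz : qprod x (imp x y) ∈ F := h1 x hx _ hxy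
    have hw2 : imp (imp y (qprod x (imp x y))) (qprod x (imp x y)) ∈ F :=
      h2 _ hz (imp y (qprod x (imp x y)))
    have hpersp : Persp (qsup y (qprod x (imp x y))) y :=
      ⟨y, lemG y _ (lemL8 x y), self_le_sup y _, PreQW.imp_self y, PreQW.imp_self y⟩
    exact h6 _ hw2 y hpersp
end

section
/- Let X be a quantum-Wajsberg algebra. (i) For any deductive system F of X, the relation ≡_F is a congruence on X (an equivalence relation such that x ≡_F y and u ≡_F v imply x→u ≡_F y→v), and {x ∈ X | x ≡_F 1} = F. (ii) Conversely, if ≡ is a congruence relation on X, then {x ∈ X | x ≡ 1} is a deductive system of X. -/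
namespace PreQW

local infixr:60 " ⇒ " => imp

section BE

variable {X : Type*} [PreQW X]

theorem qstar_qstar (x : X) : qstar (qstar x) = x := involutive x

theorem qstar_injective : Function.Injective (qstar : X → X) := fun x y h => by
  rw [← qstar_qstar x, h, qstar_qstar]

theorem imp_eq_qstar_imp_qstar (x y : X) : x ⇒ y = qstar y ⇒ qstar x := by
  conv_lhs => rw [← involutive y]
  exact exchange x (y ⇒ zero) zero

theorem qstar_qinf (x y : X) : qstar (qinf x y) = qsup (qstar x) (qstar y) :=
  involutive _

theorem qinf_qstar_qstar (x y : X) : qinf (qstar x) (qstar y) = qstar (qsup x y) := by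
  simp only [qinf, qsup, qstar_qstar]

theorem qinf_zero (x : X) : qinf x zero = zero := by
  simp only [qinf, qstar, imp_self, imp_one, one_imp]

theorem zero_qinf (x : X) : qinf zero x = zero := by
  simp only [qinf, qstar, imp_self, one_imp]

theorem qleQ_refl (x : X) : qleQ x x := by
  simp only [qleQ, qinf, qstar, imp_self, one_imp, involutive]

theorem qleQ_one (x : X) : qleQ x one := by
  simp only [qleQ, qinf, qstar, one_imp, involutive]

theorem eq_one_of_one_qleQ {x : X} (h : qleQ one x) : x = one := by
  simp only [qleQ, qinf, qstar, one_imp, zero_imp, involutive] at h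
  exact h.symm

theorem qstar_eq_of_qleQ {x l : X} (h : qleQ x l) : qstar x = (l ⇒ x) ⇒ qstar l := by
  rw [h, qstar_qinf, qsup, ← imp_eq_qstar_imp_qstar, ← h]

theorem imp_eq_of_qleQ_left {x l : X} (h : qleQ x l) (w : X) :
    x ⇒ w = (l ⇒ x) ⇒ (l ⇒ w) := by
  rw [imp_eq_qstar_imp_qstar x, qstar_eq_of_qleQ h, exchange, ← imp_eq_qstar_imp_qstar]

variable {F : Set X}

theorem IsDS.imp_imp_imp_mem (hF : IsDS F) {a b : X} (ha : a ∈ F) (hb : b ∈ F) (x : X) :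
    (a ⇒ b ⇒ x) ⇒ x ∈ F := by
  have h : a ⇒ b ⇒ (a ⇒ b ⇒ x) ⇒ x = one := by
    rw [exchange b, exchange a, imp_self]
  exact hF.2 b hb _ (hF.2 a ha _ (h ▸ hF.1))

theorem IsDS.imp_imp_mem (hF : IsDS F) {a : X} (ha : a ∈ F) (x : X) : (a ⇒ x) ⇒ x ∈ F := by
  simpa only [one_imp] using hF.imp_imp_imp_mem ha hF.1 x

theorem equivF_refl (hF : IsDS F) (x : X) : equivF F x x :=
  ⟨x, qleQ_refl x, qleQ_refl x, (imp_self x).symm ▸ hF.1, (imp_self x).symm ▸ hF.1⟩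

theorem equivF_symm {x y : X} : equivF F x y → equivF F y x
  | ⟨l, hxl, hyl, hlx, hly⟩ => ⟨l, hyl, hxl, hly, hlx⟩

theorem equivF_one_iff (hF : IsDS F) {x : X} : equivF F x one ↔ x ∈ F := by
  constructor
  · rintro ⟨l, -, h1l, hlx, -⟩
    rwa [eq_one_of_one_qleQ h1l, one_imp] at hlx
  · intro hx
    exact ⟨one, qleQ_one x, qleQ_refl one, (one_imp x).symm ▸ hx,
      (imp_self (one : X)).symm ▸ hF.1⟩

end BE

section QW

variable {X : Type*} [QW X]

theorem qstar_qleQ_imp (x w : X) : qleQ (qstar x) (x ⇒ w) := by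
  have h := QW.qw x zero w
  rwa [qinf_zero, zero_qinf] at h

theorem qleQ_qstar_imp (x w : X) : qleQ x (qstar x ⇒ w) := by
  simpa only [qstar_qstar] using qstar_qleQ_imp (qstar x) w

theorem qleQ_imp_self (x v : X) : qleQ x (v ⇒ x) := by
  rw [imp_eq_qstar_imp_qstar v]
  exact qleQ_qstar_imp x _

theorem qsup_eq_of_qleQ {z m : X} (h : qleQ z m) : qsup m z = m := by
  have hm := qstar_qleQ_imp m (qstar (m ⇒ z))
  have hexch : m ⇒ qstar (m ⇒ z) = (m ⇒ z) ⇒ qstar m := exchange m (m ⇒ z) zero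
  rw [hexch, ← qstar_eq_of_qleQ h] at hm
  exact (qstar_injective (hm.trans (qinf_qstar_qstar m z))).symm

theorem imp_eq_of_qleQ_right {z m : X} (h : qleQ z m) (w : X) :
    w ⇒ m = (m ⇒ z) ⇒ w ⇒ z := by
  conv_lhs => rw [← qsup_eq_of_qleQ h]
  exact exchange w (m ⇒ z) z

theorem qleQ_imp_of_qleQ {z m : X} (h : qleQ z m) (w : X) : qleQ z (w ⇒ m) := by
  rw [imp_eq_of_qleQ_right h, imp_eq_qstar_imp_qstar w, exchange]
  exact qleQ_qstar_imp z _

theorem qleQ_trans {x y z : X} (hxy : qleQ x y) (hyz : qleQ y z) : qleQ x z := by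
  have h := qleQ_imp_of_qleQ hxy (z ⇒ y)
  rwa [show (z ⇒ y) ⇒ y = z from qsup_eq_of_qleQ hyz] at h

theorem imp_qleQ_imp_left {u m : X} (h : qleQ u m) (x : X) : qleQ (x ⇒ u) (x ⇒ m) := by
  rw [imp_eq_of_qleQ_right h]
  exact qleQ_imp_self (x ⇒ u) (m ⇒ u)

theorem imp_qleQ_imp_right {y l : X} (h : qleQ y l) (s : X) : qleQ (l ⇒ s) (y ⇒ s) := by
  rw [imp_eq_of_qleQ_left h]
  exact qleQ_imp_self (l ⇒ s) (l ⇒ y)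

variable {F : Set X}

theorem equivF_trans (hF : IsDS F) {x y z : X} :
    equivF F x y → equivF F y z → equivF F x z := by
  rintro ⟨l, hxl, hyl, hlx, hly⟩ ⟨m, hym, hzm, hmy, hmz⟩
  have hl : l = (l ⇒ y) ⇒ y := (qsup_eq_of_qleQ hyl).symm
  have hν : (l ⇒ y) ⇒ m = (m ⇒ y) ⇒ (l ⇒ x) ⇒ x := by
    rw [imp_eq_of_qleQ_right hym, ← hl, show (l ⇒ x) ⇒ x = l from qsup_eq_of_qleQ hxl]
  refine ⟨(l ⇒ y) ⇒ m, ?_, qleQ_imp_of_qleQ hzm _, ?_, ?_⟩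
  · have hlν := imp_qleQ_imp_left hym (l ⇒ y)
    rw [← hl] at hlν
    exact qleQ_trans hxl hlν
  · rw [hν]
    exact hF.imp_imp_imp_mem hmy hlx x
  · rw [imp_eq_of_qleQ_right hzm]
    exact hF.imp_imp_imp_mem hmz hly z

theorem equivF_imp_right (hF : IsDS F) {x y : X} (u : X) :
    equivF F x y → equivF F (x ⇒ u) (y ⇒ u) := by
  rintro ⟨l, hxl, hyl, hlx, hly⟩
  have hxu : x ⇒ u = l ⇒ (l ⇒ x) ⇒ u := by rw [imp_eq_of_qleQ_left hxl, exchange]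
  refine ⟨(l ⇒ x) ⇒ y ⇒ u, ?_, qleQ_imp_self _ _, ?_, hF.imp_imp_mem hlx _⟩
  · rw [hxu, exchange (l ⇒ x) y u]
    exact imp_qleQ_imp_right hyl _
  · rw [hxu, exchange (l ⇒ x) y u, imp_eq_of_qleQ_left hyl ((l ⇒ x) ⇒ u)]
    exact hF.imp_imp_mem hly _

theorem equivF_imp_left (hF : IsDS F) (y : X) {u v : X} :
    equivF F u v → equivF F (y ⇒ u) (y ⇒ v) := by
  rintro ⟨m, hum, hvm, hmu, hmv⟩
  refine ⟨y ⇒ m, imp_qleQ_imp_left hum y, imp_qleQ_imp_left hvm y, ?_, ?_⟩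
  · rw [imp_eq_of_qleQ_right hum]
    exact hF.imp_imp_mem hmu _
  · rw [imp_eq_of_qleQ_right hvm]
    exact hF.imp_imp_mem hmv _

theorem equivF_imp (hF : IsDS F) {x y u v : X} (hxy : equivF F x y) (huv : equivF F u v) :
    equivF F (x ⇒ u) (y ⇒ v) :=
  equivF_trans hF (equivF_imp_right hF u hxy) (equivF_imp_left hF y huv)

end QW

theorem isDS_setOf_rel_one {X : Type*} [PreQW X] {r : X → X → Prop} (hr : Equivalence r)
    (hcong : ∀ x y u v : X, r x y → r u v → r (x ⇒ u) (y ⇒ v)) : IsDS {x : X | r x one} := by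
  refine ⟨hr.refl (one : X), fun x hx y hxy => ?_⟩
  have hy : r (x ⇒ y) y := by simpa only [one_imp] using hcong x one y y hx (hr.refl y)
  exact hr.trans (hr.symm hy) hxy

end PreQW

open PreQW
/-- Theorem 4.8: correspondence between deductive systems and congruences. -/
theorem qw_thm_4_8 {X : Type*} [QW X] :
    (∀ F : Set X, IsDS F →
      (Equivalence (equivF F) ∧
        (∀ x y u v : X, equivF F x y → equivF F u v →
          equivF F (imp x u) (imp y v)) ∧
        {x : X | equivF F x one} = F)) ∧
    (∀ r : X → X → Prop, Equivalence r →
      (∀ x y u v : X, r x y → r u v → r (imp x u) (imp y v)) →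
      IsDS {x : X | r x one}) :=
  ⟨fun _ hF => ⟨⟨equivF_refl hF, equivF_symm, equivF_trans hF⟩, fun _ _ _ _ => equivF_imp hF,
      Set.ext fun _ => equivF_one_iff hF⟩,
    fun _ hr hcong => isDS_setOf_rel_one hr hcong⟩
end
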